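/- arXiv:2107.10619 — 2 statements merged into one kernel-verified Lean document; each statement's English description precedes it below -/
import Mathlib

section
/- Let m ≥ 4, let G = (ℤ/mℤ)², let g ∈ G, and let S = f₁^[m−1] · f₂^[m−1] · (f₁+f₂) ∈ Υ_nu(G), where (f₁,f₂) is a basis of G. If S' = f₂^[−2] · S · (f₂+g) · (f₂−g) ∈ Υ(G), then g ∈ ⟨f₁⟩. -/
/-- `(e₁, e₂)` is a basis of the abelian group `G`, i.e. `G = ⟨e₁⟩ ⊕ ⟨e₂⟩`. -/
def IsBasis {G : Type*} [AddCommGroup G] (e₁ e₂ : G) : Prop :=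
  AddSubgroup.zmultiples e₁ ⊔ AddSubgroup.zmultiples e₂ = ⊤ ∧
    AddSubgroup.zmultiples e₁ ⊓ AddSubgroup.zmultiples e₂ = ⊥

/-- `Υ(G)` for `G = (ℤ/mℤ)²`: all sequences `e₁^[m-1] · ∏_{i=1}^m (xᵢe₁ + e₂)` for some
basis `(e₁, e₂)` and `x₁, …, x_m ∈ [0, m-1]` with `x₁ + ⋯ + x_m ≡ 1 (mod m)`. -/
def Upsilon (m : ℕ) : Set (Multiset (ZMod m × ZMod m)) :=
  { S | ∃ (e₁ e₂ : ZMod m × ZMod m) (x : Fin m → ℕ),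
      IsBasis e₁ e₂ ∧ (∀ i, x i ≤ m - 1) ∧ (∑ i, x i) % m = 1 % m ∧
      S = Multiset.replicate (m - 1) e₁ +
          Multiset.map (fun i => x i • e₁ + e₂) (Finset.univ : Finset (Fin m)).val }

/-- `Υ_u(G)`: members of `Υ(G)` with a unique term of multiplicity `m - 1`. -/
def UpsilonU (m : ℕ) : Set (Multiset (ZMod m × ZMod m)) :=
  { S | S ∈ Upsilon m ∧ ∃! g, S.count g = m - 1 }

/-- `Υ_nu(G)`: sequences `e₁^[m-1] · e₂^[m-1] · (e₁ + e₂)` for some basis `(e₁, e₂)`. -/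
def UpsilonNU (m : ℕ) : Set (Multiset (ZMod m × ZMod m)) :=
  { S | ∃ (e₁ e₂ : ZMod m × ZMod m), IsBasis e₁ e₂ ∧
      S = Multiset.replicate (m - 1) e₁ + Multiset.replicate (m - 1) e₂ + {e₁ + e₂} }

/-! In a sequence of `Υ(G)` built on the basis `(e₁, e₂)`, the term `e₁` has multiplicity exactly
`m - 1` (no other term lies in `⟨e₁⟩`), and all remaining terms lie in the coset `e₂ + ⟨e₁⟩`, so
their differences lie in `⟨e₁⟩`. In `S' = f₁^[m-1] · f₂^[m-3] · (f₁+f₂) · (f₂+g) · (f₂-g)` a term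
of multiplicity `m - 1` is `f₁`, or `f₂` (forcing `f₂ ± g = f₂`, so `g = 0`), or equal to all three
of the last terms (forcing `g = f₁`). If it is `f₁`, then `f₂` (still present since `m ≥ 4`) and
`f₂ + g` lie in one coset of `⟨f₁⟩`, so `g ∈ ⟨f₁⟩`. -/

lemma ZMod.not_isAddCyclic_prod_self {m : ℕ} (hm : m ≠ 1) : ¬ IsAddCyclic (ZMod m × ZMod m) := by
  rw [AddGroup.isAddCyclic_prod_iff, Nat.card_zmod, Nat.coprime_self]
  simp [hm]

namespace IsBasis

variable {G : Type*} [AddCommGroup G] {e₁ e₂ : G}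

lemma symm (h : IsBasis e₁ e₂) : IsBasis e₂ e₁ :=
  ⟨by rw [sup_comm, h.1], by rw [inf_comm, h.2]⟩

lemma notMem_zmultiples (hG : ¬ IsAddCyclic G) (h : IsBasis e₁ e₂) :
    e₂ ∉ AddSubgroup.zmultiples e₁ := by
  intro he
  have htop : AddSubgroup.zmultiples e₁ = ⊤ := by
    rw [← h.1]
    exact (sup_eq_left.mpr (AddSubgroup.zmultiples_le_of_mem he)).symm
  exact hG (isAddCyclic_iff_exists_zmultiples_eq_top.mpr ⟨e₁, htop⟩)

lemma left_ne_zero (hG : ¬ IsAddCyclic G) (h : IsBasis e₁ e₂) : e₁ ≠ 0 := by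
  rintro rfl
  exact h.symm.notMem_zmultiples hG (zero_mem _)

lemma right_ne_left (hG : ¬ IsAddCyclic G) (h : IsBasis e₁ e₂) : e₂ ≠ e₁ := by
  rintro rfl
  exact h.notMem_zmultiples hG (AddSubgroup.mem_zmultiples e₂)

end IsBasis

lemma exists_count_eq_of_mem_upsilon {m : ℕ} (hm : m ≠ 1) {S : Multiset (ZMod m × ZMod m)}
    (hS : S ∈ Upsilon m) :
    ∃ e, S.count e = m - 1 ∧
      ∀ a ∈ S, ∀ b ∈ S, a ≠ e → b ≠ e → a - b ∈ AddSubgroup.zmultiples e := by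
  obtain ⟨e₁, e₂, x, hbasis, -, -, rfl⟩ := hS
  set T := Multiset.map (fun i => x i • e₁ + e₂) (Finset.univ : Finset (Fin m)).val
  have hcoset : ∀ a ∈ T, a - e₂ ∈ AddSubgroup.zmultiples e₁ := by
    intro a ha
    obtain ⟨i, -, rfl⟩ := Multiset.mem_map.mp ha
    simpa using AddSubgroup.nsmul_mem _ (AddSubgroup.mem_zmultiples e₁) (x i)
  have hnotMem : e₁ ∉ T := fun he =>
    hbasis.notMem_zmultiples (ZMod.not_isAddCyclic_prod_self hm)
      (by simpa using AddSubgroup.sub_mem _ (AddSubgroup.mem_zmultiples e₁) (hcoset e₁ he))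
  have hmemT : ∀ a ∈ Multiset.replicate (m - 1) e₁ + T, a ≠ e₁ → a ∈ T := by
    intro a ha hne
    rcases Multiset.mem_add.mp ha with ha | ha
    · exact absurd (Multiset.eq_of_mem_replicate ha) hne
    · exact ha
  refine ⟨e₁, ?_, fun a ha b hb hae hbe => ?_⟩
  · rw [Multiset.count_add, Multiset.count_replicate_self, Multiset.count_eq_zero.mpr hnotMem,
      add_zero]
  · simpa using AddSubgroup.sub_mem _ (hcoset a (hmemT a ha hae)) (hcoset b (hmemT b hb hbe))

section Exchange

variable {G : Type*} [AddCommGroup G] [DecidableEq G] {m : ℕ} {f₁ f₂ g e : G}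

def exchangeSeq (m : ℕ) (f₁ f₂ g : G) : Multiset G :=
  Multiset.replicate (m - 1) f₁ + Multiset.replicate (m - 3) f₂ + {f₁ + f₂, f₂ + g, f₂ - g}

lemma exchangeSeq_eq (hm : 3 ≤ m) :
    Multiset.replicate (m - 1) f₁ + Multiset.replicate (m - 1) f₂ + {f₁ + f₂}
      - Multiset.replicate 2 f₂ + {f₂ + g, f₂ - g} = exchangeSeq m f₁ f₂ g := by
  have hsplit : Multiset.replicate (m - 1) f₂ =
      Multiset.replicate (m - 3) f₂ + Multiset.replicate 2 f₂ := by
    rw [← Multiset.replicate_add]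
    congr 1
    omega
  rw [hsplit, ← add_assoc, add_right_comm _ (Multiset.replicate 2 f₂), add_tsub_cancel_right,
    add_assoc _ {f₁ + f₂}, Multiset.singleton_add]
  rfl

lemma count_exchangeSeq (e : G) : (exchangeSeq m f₁ f₂ g).count e =
    (if f₁ = e then m - 1 else 0) + (if f₂ = e then m - 3 else 0) +
      ({f₁ + f₂, f₂ + g, f₂ - g} : Multiset G).count e := by
  rw [exchangeSeq, Multiset.count_add, Multiset.count_add, Multiset.count_replicate,
    Multiset.count_replicate]

lemma mem_zmultiples_of_count_exchangeSeq_left (hm : 4 ≤ m) (hf : f₂ ≠ f₁)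
    (hcount : (exchangeSeq m f₁ f₂ g).count f₁ = m - 1)
    (hdiff : ∀ a ∈ exchangeSeq m f₁ f₂ g, ∀ b ∈ exchangeSeq m f₁ f₂ g, a ≠ f₁ → b ≠ f₁ →
      a - b ∈ AddSubgroup.zmultiples f₁) :
    g ∈ AddSubgroup.zmultiples f₁ := by
  have hne : f₂ + g ≠ f₁ := by
    intro h
    have hmem : f₁ ∈ ({f₁ + f₂, f₂ + g, f₂ - g} : Multiset G) := by rw [← h]; simp
    have := Multiset.count_pos.mpr hmem
    rw [count_exchangeSeq, if_pos rfl] at hcount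
    omega
  have hf₂_mem : f₂ ∈ exchangeSeq m f₁ f₂ g :=
    Multiset.mem_add.mpr (.inl (Multiset.mem_add.mpr (.inr (Multiset.mem_replicate.mpr
      ⟨by omega, rfl⟩))))
  simpa using hdiff (f₂ + g) (by simp [exchangeSeq]) f₂ hf₂_mem hne hf

lemma eq_zero_of_count_exchangeSeq_right (hm : 3 ≤ m) (hf₁ : f₁ ≠ 0) (hf : f₂ ≠ f₁)
    (hcount : (exchangeSeq m f₁ f₂ g).count f₂ = m - 1) : g = 0 := by
  have hne : f₂ ≠ f₁ + f₂ := by simpa [eq_comm] using hf₁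
  rw [count_exchangeSeq, if_neg hf.symm, if_pos rfl] at hcount
  have hdrop : ({f₁ + f₂, f₂ + g, f₂ - g} : Multiset G).count f₂ =
      ({f₂ + g, f₂ - g} : Multiset G).count f₂ := Multiset.count_cons_of_ne hne _
  have h2 : ({f₂ + g, f₂ - g} : Multiset G).count f₂ = 2 := by omega
  simpa using Multiset.count_eq_card.mp h2 (f₂ + g) (by simp)

lemma eq_left_of_count_exchangeSeq (hm : 4 ≤ m) (he₁ : f₁ ≠ e) (he₂ : f₂ ≠ e)
    (hcount : (exchangeSeq m f₁ f₂ g).count e = m - 1) : g = f₁ := by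
  rw [count_exchangeSeq, if_neg he₁, if_neg he₂] at hcount
  set T : Multiset G := {f₁ + f₂, f₂ + g, f₂ - g}
  have hcard : T.card = 3 := rfl
  have hfull : T.count e = T.card := by
    have := Multiset.count_le_card e T
    omega
  have hall := Multiset.count_eq_card.mp hfull
  have h := (hall (f₁ + f₂) (by simp [T])).symm.trans (hall (f₂ + g) (by simp [T]))
  rw [add_comm f₁] at h
  exact (add_left_cancel h).symm

end Exchange

theorem stmt_4_general (m : ℕ) (hm : 4 ≤ m) (g f₁ f₂ : ZMod m × ZMod m)
    (hbasis : IsBasis f₁ f₂)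
    (S : Multiset (ZMod m × ZMod m))
    (hS : S = Multiset.replicate (m - 1) f₁ + Multiset.replicate (m - 1) f₂ + {f₁ + f₂})
    (S' : Multiset (ZMod m × ZMod m))
    (hS' : S' = (S - Multiset.replicate 2 f₂) + {f₂ + g, f₂ - g})
    (hS'U : S' ∈ Upsilon m) :
    g ∈ AddSubgroup.zmultiples f₁ := by
  have hG := ZMod.not_isAddCyclic_prod_self (m := m) (by omega)
  have hf := hbasis.right_ne_left hG
  rw [hS', hS, exchangeSeq_eq (by omega)] at hS'U
  obtain ⟨e, hcount, hdiff⟩ := exists_count_eq_of_mem_upsilon (by omega) hS'U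
  by_cases he₁ : f₁ = e
  · subst he₁
    exact mem_zmultiples_of_count_exchangeSeq_left hm hf hcount hdiff
  by_cases he₂ : f₂ = e
  · subst he₂
    rw [eq_zero_of_count_exchangeSeq_right (by omega) (hbasis.left_ne_zero hG) hf hcount]
    exact zero_mem _
  · rw [eq_left_of_count_exchangeSeq hm he₁ he₂ hcount]
    exact AddSubgroup.mem_zmultiples f₁

theorem stmt_4 (m : ℕ) (hm : 4 ≤ m) (g f₁ f₂ : ZMod m × ZMod m)
    (hbasis : IsBasis f₁ f₂)
    (S : Multiset (ZMod m × ZMod m))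
    (hS : S = Multiset.replicate (m - 1) f₁ + Multiset.replicate (m - 1) f₂ + {f₁ + f₂})
    (hSNU : S ∈ UpsilonNU m)
    (S' : Multiset (ZMod m × ZMod m))
    (hS' : S' = (S - Multiset.replicate 2 f₂) + {f₂ + g, f₂ - g})
    (hS'U : S' ∈ Upsilon m) :
    g ∈ AddSubgroup.zmultiples f₁ :=
  stmt_4_general m hm g f₁ f₂ hbasis S hS S' hS' hS'U
end

section
/- Let m ≥ 4, let G = (ℤ/mℤ)², let g ∈ G, and let S = f₁^[m−1] · f₂^[m−1] · (f₁+f₂) ∈ Υ_nu(G), where (f₁,f₂) is a basis of G. If S' = f₁^[−1] · f₂^[−1] · S · (f₁+g) · (f₂−g) ∈ Υ_nu(G), then g ∈ {0, −f₁+f₂} and S' = S. -/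
/-!
Counting the term `f₁`: removing `f₁, f₂` from `S` and adding `f₁ + g, f₂ - g` leaves `f₁` with
multiplicity `m - 2` unless one of the new terms equals `f₁`. In a sequence of `Υ_nu(G)` every
multiplicity has the form `a (m - 1) + b` with `a ≤ 2`, `b ≤ 1`, which `m - 2` is not for `m ≥ 4`.
So `f₁ + g = f₁` or `f₂ - g = f₁`, and in both cases the two new terms are `f₁, f₂` again.
-/

lemma not_isAddCyclic_zmod_prod {m : ℕ} (hm : 2 ≤ m) : ¬ IsAddCyclic (ZMod m × ZMod m) := by
  rw [AddGroup.isAddCyclic_prod_iff, Nat.card_zmod, Nat.coprime_self]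
  omega

namespace IsBasis

variable {G : Type*} [AddCommGroup G] {e₁ e₂ : G}

lemma ne_zero_right (h : IsBasis e₁ e₂) (hG : ¬ IsAddCyclic G) : e₂ ≠ 0 := by
  rintro rfl
  have hsup := h.1
  rw [AddSubgroup.zmultiples_zero_eq_bot, sup_bot_eq] at hsup
  exact hG (isAddCyclic_iff_exists_zmultiples_eq_top.2 ⟨e₁, hsup⟩)

lemma ne (h : IsBasis e₁ e₂) (hG : ¬ IsAddCyclic G) : e₁ ≠ e₂ := by
  rintro rfl
  have hsup := h.1
  rw [sup_idem] at hsup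
  exact hG (isAddCyclic_iff_exists_zmultiples_eq_top.2 ⟨e₁, hsup⟩)

end IsBasis

lemma Multiset.count_replicate_add_replicate_add_singleton_ne_pred {α : Type*} [DecidableEq α]
    {n : ℕ} (hn : 3 ≤ n) (a b c x : α) :
    count x (replicate n a + replicate n b + {c}) ≠ n - 1 := by
  simp only [count_add, count_replicate, count_singleton]
  split_ifs <;> omega

lemma Multiset.pair_add_sub_eq_self {G : Type*} [AddCommGroup G] {f₁ f₂ g : G}
    (hg : g = 0 ∨ g = -f₁ + f₂) : ({f₁ + g, f₂ - g} : Multiset G) = {f₁, f₂} := by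
  rcases hg with rfl | rfl
  · simp
  · rw [show f₁ + (-f₁ + f₂) = f₂ by abel, show f₂ - (-f₁ + f₂) = f₁ by abel]
    exact cons_swap f₂ f₁ 0

theorem stmt_10_general (m : ℕ) (hm : 4 ≤ m) (g f₁ f₂ : ZMod m × ZMod m)
    (hbasis : IsBasis f₁ f₂)
    (S : Multiset (ZMod m × ZMod m))
    (hS : S = Multiset.replicate (m - 1) f₁ + Multiset.replicate (m - 1) f₂ + {f₁ + f₂})
    (S' : Multiset (ZMod m × ZMod m))
    (hS' : S' = (S - {f₁, f₂}) + {f₁ + g, f₂ - g})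
    (hS'U : S' ∈ UpsilonNU m) :
    (g = 0 ∨ g = -f₁ + f₂) ∧ S' = S := by
  have hG := not_isAddCyclic_zmod_prod (m := m) (by omega)
  have hf₂ := hbasis.ne_zero_right hG
  have hf₁₂ := hbasis.ne hG
  have hle : ({f₁, f₂} : Multiset _) ≤ S := by
    rw [hS, Multiset.insert_eq_cons, ← Multiset.singleton_add]
    refine le_trans (add_le_add ?_ ?_) (Multiset.le_add_right _ _) <;>
      exact Multiset.singleton_le.2 (Multiset.mem_replicate.2 ⟨by omega, rfl⟩)
  have hg : g = 0 ∨ g = -f₁ + f₂ := by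
    by_contra! hg
    obtain ⟨e₁, e₂, -, hS'e⟩ := hS'U
    have hcount : S'.count f₁ = m - 1 - 1 := by
      have hf₁_sum : f₁ ≠ f₁ + f₂ := by simpa using hf₂
      have hg₁ : f₁ ≠ f₁ + g := by simpa using hg.1
      have hg₂ : f₁ ≠ f₂ - g := fun h => hg.2 (by rw [h]; abel)
      simp [hS', hS, Multiset.count_replicate, hf₁₂, hf₁₂.symm, hf₁_sum, hg₁, hg₂]
    rw [hS'e] at hcount
    exact Multiset.count_replicate_add_replicate_add_singleton_ne_pred (by omega) _ _ _ _ hcount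
  refine ⟨hg, ?_⟩
  rw [hS', Multiset.pair_add_sub_eq_self hg, tsub_add_cancel_of_le hle]

theorem stmt_10 (m : ℕ) (hm : 4 ≤ m) (g f₁ f₂ : ZMod m × ZMod m)
    (hbasis : IsBasis f₁ f₂)
    (S : Multiset (ZMod m × ZMod m))
    (hS : S = Multiset.replicate (m - 1) f₁ + Multiset.replicate (m - 1) f₂ + {f₁ + f₂})
    (hSNU : S ∈ UpsilonNU m)
    (S' : Multiset (ZMod m × ZMod m))
    (hS' : S' = (S - {f₁, f₂}) + {f₁ + g, f₂ - g})
    (hS'U : S' ∈ UpsilonNU m) :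
    (g = 0 ∨ g = -f₁ + f₂) ∧ S' = S :=
  stmt_10_general m hm g f₁ f₂ hbasis S hS S' hS' hS'U
end
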